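/- arXiv:2103.00175 — 2 statements merged into one kernel-verified Lean document; each statement's English description precedes it below -/
import Mathlib

section
/- Let n ≥ 2, 2/n - 1 < w ≤ 1. Let p_S(n) be the positive root of -(n-1)p² + (n+1)p + 2 = 0 and p_c(n,w) the positive root of -(n-1)p² + (n+1+4/(n(1+w)))p + 2 - 4/(n(1+w)) = 0. Then p_c(n,w) > p_S(n). -/
/-!
Write `q_S(p) = -(n-1)p² + (n+1)p + 2` and `c = 4/(n(1+w))`, so that the second quadratic is
`q_c(p) = q_S(p) + c(p - 1)`. The condition on `w` gives `0 < c < 2`, hence `q_c(0) = 2 - c > 0`.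
Since `q_S(p) > 0` on `[0, 1]`, its positive root satisfies `p_S > 1`, so `q_c(p_S) = c(p_S - 1) > 0`.
A concave quadratic that is positive at `0` and at `p_S` is positive on `[0, p_S]`, so its positive
root lies beyond `p_S`.
-/

lemma one_lt_of_neg_mul_sq_add_mul_add_two_eq_zero {m p : ℝ} (hm : 1 ≤ m) (hp : 0 < p)
    (h : -(m - 1) * p ^ 2 + (m + 1) * p + 2 = 0) : 1 < p := by
  by_contra! hp1
  have : 0 ≤ (m - 1) * p * (1 - p) := by
    have := sub_nonneg.mpr hm; have := sub_nonneg.mpr hp1; positivity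
  nlinarith

lemma lt_of_concave_quadratic_eq_zero {a B C r s : ℝ} (ha : 0 ≤ a) (hC : 0 ≤ C) (hr : 0 < r)
    (hs : 0 < -a * s ^ 2 + B * s + C) (hroot : -a * r ^ 2 + B * r + C = 0) : s < r := by
  by_contra! hrs
  have identity : s * (-a * r ^ 2 + B * r + C)
      = (s - r) * C + r * (-a * s ^ 2 + B * s + C) + a * r * s * (s - r) := by ring
  have hsr := sub_nonneg.mpr hrs
  have : 0 < r * (-a * s ^ 2 + B * s + C) := mul_pos hr hs
  have : 0 ≤ (s - r) * C := mul_nonneg hsr hC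
  have : 0 ≤ a * r * s * (s - r) := by have := hr.trans_le hrs; positivity
  rw [hroot, mul_zero] at identity
  linarith

theorem stmt_10_general (n : ℕ) (hn : 2 ≤ n) (w : ℝ) (hw1 : 2 / n - 1 < w)
    (pS pc : ℝ) (hpS0 : 0 < pS)
    (hpS : -((n : ℝ) - 1) * pS ^ 2 + ((n : ℝ) + 1) * pS + 2 = 0)
    (hpc0 : 0 < pc)
    (hpc : -((n : ℝ) - 1) * pc ^ 2 + ((n : ℝ) + 1 + 4 / (n * (1 + w))) * pc + 2
      - 4 / (n * (1 + w)) = 0) :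
    pc > pS := by
  have hn2 : (2 : ℝ) ≤ n := by exact_mod_cast hn
  have hnw : 2 < n * (1 + w) := by
    have := (div_lt_iff₀' (by linarith : (0 : ℝ) < n)).mp (by linarith : 2 / (n : ℝ) < 1 + w)
    linarith
  set c := 4 / (n * (1 + w)) with hc
  have hc0 : 0 < c := by positivity
  have hc2 : c < 2 := by rw [hc, div_lt_iff₀ (by linarith)]; linarith
  have hpS1 : 1 < pS := one_lt_of_neg_mul_sq_add_mul_add_two_eq_zero (by linarith) hpS0 hpS
  have hqc_pS : 0 < -((n : ℝ) - 1) * pS ^ 2 + ((n : ℝ) + 1 + c) * pS + (2 - c) := by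
    linear_combination -hpS + mul_pos hc0 (sub_pos.mpr hpS1)
  exact lt_of_concave_quadratic_eq_zero (by linarith) (by linarith) hpc0 hqc_pS
    (by linear_combination hpc)

theorem stmt_10 (n : ℕ) (hn : 2 ≤ n) (w : ℝ) (hw1 : 2 / n - 1 < w) (hw2 : w ≤ 1)
    (pS pc : ℝ) (hpS0 : 0 < pS)
    (hpS : -((n : ℝ) - 1) * pS ^ 2 + ((n : ℝ) + 1) * pS + 2 = 0)
    (hpc0 : 0 < pc)
    (hpc : -((n : ℝ) - 1) * pc ^ 2 + ((n : ℝ) + 1 + 4 / (n * (1 + w))) * pc + 2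
      - 4 / (n * (1 + w)) = 0) :
    pc > pS :=
  stmt_10_general n hn w hw1 pS pc hpS0 hpS hpc0 hpc
end

section
/- For p > 1, μ ≥ 0, b > 0 and constants A₁, C_R > 0, the recursively defined sequence C_0 = A₀ > 0, C_{j+1} = A₁ C_R C_j^p / (p b_j + 2)² with b_j = p^j(b + 2/(p-1)) - 2/(p-1) satisfies C_j ≥ exp(E p^j) for all sufficiently large j, where E = (1/(p-1)) min(0, ln B) - 2 ln p · ∑_{k=0}^{∞} k/p^k + ln A₀ and B = (b + 2/(p-1))^{-2} A₁ C_R. -/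
/-!
Since `p bⱼ + 2 ≤ p^{j+1} (b + 2/(p-1))`, the recursion gives `C_{j+1} ≥ B C_j^p / p^{2(j+1)}`,
i.e. `Lⱼ = log Cⱼ` satisfies `L_{j+1} ≥ p Lⱼ + log B - 2 (j+1) log p`. Unrolling this linear
recursion, `Lⱼ ≥ p^j (log A₀ + ∑_{i<j} (log B - 2 (i+1) log p) / p^{i+1})`, and the bracket is
bounded below by `E` uniformly in `j`, using `∑ p^{-(i+1)} ≤ 1/(p-1)` and `∑ (i+1)/p^{i+1} ≤ ∑' k/p^k`.
-/

open Real Finset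

theorem pow_mul_le_of_mul_add_le {p : ℝ} (hp : 0 < p) {L c : ℕ → ℝ}
    (h : ∀ j, p * L j + c j ≤ L (j + 1)) (j : ℕ) :
    p ^ j * (L 0 + ∑ i ∈ range j, c i / p ^ (i + 1)) ≤ L j := by
  induction j with
  | zero => simp
  | succ n ih =>
    calc p ^ (n + 1) * (L 0 + ∑ i ∈ range (n + 1), c i / p ^ (i + 1))
        = p * (p ^ n * (L 0 + ∑ i ∈ range n, c i / p ^ (i + 1))) + c n := by
          rw [sum_range_succ]; field_simp; ring
      _ ≤ p * L n + c n := by gcongr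
      _ ≤ L (n + 1) := h n

theorem add_sum_range_succ_le_tsum {f : ℕ → ℝ} (hf : Summable f) (h0 : ∀ k, 0 ≤ f k) (j : ℕ) :
    f 0 + ∑ i ∈ range j, f (i + 1) ≤ ∑' k, f k := by
  rw [add_comm, ← sum_range_succ']
  exact hf.sum_le_tsum _ fun k _ => h0 k

theorem le_sum_range_div_pow {p a ℓ : ℝ} (hp : 1 < p) (hℓ : 0 ≤ ℓ) (j : ℕ) :
    1 / (p - 1) * min 0 a - 2 * ℓ * ∑' k : ℕ, (k : ℝ) / p ^ k ≤
      ∑ i ∈ range j, (a - 2 * ((i : ℝ) + 1) * ℓ) / p ^ (i + 1) := by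
  have hp0 : 0 < p := one_pos.trans hp
  have hr0 : 0 ≤ p⁻¹ := inv_nonneg.mpr hp0.le
  have hr1 : p⁻¹ < 1 := inv_lt_one_of_one_lt₀ hp
  have hgeom : ∑ i ∈ range j, p⁻¹ ^ (i + 1) ≤ 1 / (p - 1) := by
    have h := add_sum_range_succ_le_tsum (summable_geometric_of_lt_one hr0 hr1)
      (fun k => pow_nonneg hr0 k) j
    have hsum : (1 - p⁻¹)⁻¹ = 1 + 1 / (p - 1) := by
      field_simp [(sub_pos.mpr hp).ne']; ring
    rw [tsum_geometric_of_lt_one hr0 hr1, hsum, pow_zero] at h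
    linarith
  have hmoment : ∑ i ∈ range j, ((i : ℝ) + 1) / p ^ (i + 1) ≤ ∑' k : ℕ, (k : ℝ) / p ^ k := by
    have hs : Summable fun k : ℕ => (k : ℝ) / p ^ k := by
      simpa [div_eq_mul_inv] using summable_pow_mul_geometric_of_norm_lt_one 1
        (show ‖p⁻¹‖ < 1 by rwa [norm_of_nonneg hr0])
    simpa using add_sum_range_succ_le_tsum hs (fun k => by positivity) j
  have hmin : min 0 a ≤ 0 := min_le_left _ _
  calc 1 / (p - 1) * min 0 a - 2 * ℓ * ∑' k : ℕ, (k : ℝ) / p ^ k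
      ≤ min 0 a * ∑ i ∈ range j, p⁻¹ ^ (i + 1)
          - 2 * ℓ * ∑ i ∈ range j, ((i : ℝ) + 1) / p ^ (i + 1) := by
        linarith [mul_le_mul_of_nonpos_left hgeom hmin,
          mul_le_mul_of_nonneg_left hmoment (by positivity : 0 ≤ 2 * ℓ)]
    _ = ∑ i ∈ range j, (min 0 a * p⁻¹ ^ (i + 1) - 2 * ℓ * (((i : ℝ) + 1) / p ^ (i + 1))) := by
        rw [sum_sub_distrib, mul_sum, mul_sum]
    _ ≤ ∑ i ∈ range j, (a - 2 * ((i : ℝ) + 1) * ℓ) / p ^ (i + 1) := by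
        refine sum_le_sum fun i _ => ?_
        refine (sub_le_sub_right (mul_le_mul_of_nonneg_right (min_le_right 0 a)
          (pow_nonneg hr0 (i + 1))) _).trans_eq ?_
        rw [inv_pow]
        ring

theorem mul_pow_sub_add_two_bounds {p b : ℝ} (hp : 1 < p) (hb : 0 < b) (j : ℕ) :
    0 < p * (p ^ j * (b + 2 / (p - 1)) - 2 / (p - 1)) + 2 ∧
      p * (p ^ j * (b + 2 / (p - 1)) - 2 / (p - 1)) + 2 ≤ p ^ (j + 1) * (b + 2 / (p - 1)) := by
  have hp1 : 0 < p - 1 := sub_pos.mpr hp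
  have hq : 0 < b + 2 / (p - 1) := by positivity
  have heq : p * (p ^ j * (b + 2 / (p - 1)) - 2 / (p - 1)) + 2
      = p ^ (j + 1) * (b + 2 / (p - 1)) - 2 / (p - 1) := by
    field_simp; ring
  rw [heq]
  constructor
  · nlinarith [one_le_pow₀ (M₀ := ℝ) (n := j + 1) hp.le]
  · linarith [div_pos two_pos hp1]

section Recursion

variable {p K q : ℝ} {C D : ℕ → ℝ}

theorem pos_of_eq_mul_rpow_div_sq (hC0 : 0 < C 0) (hK : 0 < K) (hD : ∀ j, D j ≠ 0)
    (hrec : ∀ j, C (j + 1) = K * C j ^ p / D j ^ 2) (j : ℕ) : 0 < C j := by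
  induction j with
  | zero => exact hC0
  | succ n ih =>
    rw [hrec]
    have := hD n
    positivity

theorem log_mul_add_le_log_succ (hp : 0 < p) (hK : 0 < K) (hq : 0 < q) {j : ℕ} (hC : 0 < C j)
    (hD : 0 < D j) (hDle : D j ≤ p ^ (j + 1) * q) (hrec : C (j + 1) = K * C j ^ p / D j ^ 2) :
    p * log (C j) + (log (K / q ^ 2) - 2 * ((j : ℝ) + 1) * log p) ≤ log (C (j + 1)) := by
  have hCp : 0 < C j ^ p := rpow_pos_of_pos hC p
  have hle : K * C j ^ p / (p ^ (j + 1) * q) ^ 2 ≤ C (j + 1) := by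
    rw [hrec]
    gcongr
  calc p * log (C j) + (log (K / q ^ 2) - 2 * ((j : ℝ) + 1) * log p)
      = log (K * C j ^ p / (p ^ (j + 1) * q) ^ 2) := by
        rw [log_div hK.ne' (by positivity), log_div (by positivity) (by positivity),
          log_mul hK.ne' hCp.ne', log_rpow hC, log_pow, log_pow, log_mul (by positivity) hq.ne',
          log_pow]
        push_cast
        ring
    _ ≤ log (C (j + 1)) := log_le_log (by positivity) hle

end Recursion

open Real in
theorem stmt_15_general (p b A₀ A₁ CR : ℝ) (hp : 1 < p) (hb : 0 < b)
    (hA₀ : 0 < A₀) (hA₁ : 0 < A₁) (hCR : 0 < CR)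
    (bseq C : ℕ → ℝ)
    (hbseq : ∀ j, bseq j = p ^ j * (b + 2 / (p - 1)) - 2 / (p - 1))
    (hC0 : C 0 = A₀)
    (hCrec : ∀ j, C (j + 1) = A₁ * CR * C j ^ p / (p * bseq j + 2) ^ 2)
    (B E : ℝ)
    (hB : B = (b + 2 / (p - 1)) ^ (-2 : ℝ) * A₁ * CR)
    (hE : E = (1 / (p - 1)) * min 0 (Real.log B)
      - 2 * Real.log p * ∑' k : ℕ, (k : ℝ) / p ^ k + Real.log A₀) :
    ∃ N : ℕ, ∀ j ≥ N, C j ≥ Real.exp (E * p ^ j) := by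
  have hp0 : 0 < p := one_pos.trans hp
  set q := b + 2 / (p - 1)
  have hq : 0 < q := by have := sub_pos.mpr hp; positivity
  have hB' : B = A₁ * CR / q ^ 2 := by
    rw [hB, rpow_neg hq.le, rpow_two]; ring
  have hD : ∀ j, 0 < p * bseq j + 2 ∧ p * bseq j + 2 ≤ p ^ (j + 1) * q := fun j => by
    rw [hbseq]; exact mul_pow_sub_add_two_bounds hp hb j
  have hK : 0 < A₁ * CR := mul_pos hA₁ hCR
  have hC := pos_of_eq_mul_rpow_div_sq (hC0 ▸ hA₀) hK (fun j => (hD j).1.ne') hCrec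
  refine ⟨0, fun j _ => ?_⟩
  rw [ge_iff_le, ← exp_log (hC j), exp_le_exp, hE, mul_comm, hB', ← hC0]
  calc p ^ j * (1 / (p - 1) * min 0 (log (A₁ * CR / q ^ 2))
        - 2 * log p * ∑' k : ℕ, (k : ℝ) / p ^ k + log (C 0))
      ≤ p ^ j * (log (C 0) + ∑ i ∈ range j,
          (log (A₁ * CR / q ^ 2) - 2 * ((i : ℝ) + 1) * log p) / p ^ (i + 1)) := by
        refine mul_le_mul_of_nonneg_left ?_ (by positivity)
        linarith [le_sum_range_div_pow (a := log (A₁ * CR / q ^ 2)) hp (log_nonneg hp.le) j]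
    _ ≤ log (C j) := pow_mul_le_of_mul_add_le hp0 (fun j =>
          log_mul_add_le_log_succ (D := fun j => p * bseq j + 2) hp0 hK hq (hC j) (hD j).1
            (hD j).2 (hCrec j)) j

open Real in
theorem stmt_15 (p μ b A₀ A₁ CR : ℝ) (hp : 1 < p) (hμ : 0 ≤ μ) (hb : 0 < b)
    (hA₀ : 0 < A₀) (hA₁ : 0 < A₁) (hCR : 0 < CR)
    (bseq C : ℕ → ℝ)
    (hbseq : ∀ j, bseq j = p ^ j * (b + 2 / (p - 1)) - 2 / (p - 1))
    (hC0 : C 0 = A₀)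
    (hCrec : ∀ j, C (j + 1) = A₁ * CR * C j ^ p / (p * bseq j + 2) ^ 2)
    (B E : ℝ)
    (hB : B = (b + 2 / (p - 1)) ^ (-2 : ℝ) * A₁ * CR)
    (hE : E = (1 / (p - 1)) * min 0 (Real.log B)
      - 2 * Real.log p * ∑' k : ℕ, (k : ℝ) / p ^ k + Real.log A₀) :
    ∃ N : ℕ, ∀ j ≥ N, C j ≥ Real.exp (E * p ^ j) :=
  stmt_15_general p b A₀ A₁ CR hp hb hA₀ hA₁ hCR bseq C hbseq hC0 hCrec B E hB hE
end
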